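/- arXiv:2305.12688 — 2 statements merged into one kernel-verified Lean document; each statement's English description precedes it below -/
import Mathlib

section
/- Let X : V → V → L be a stable labeling of a finite vertex set V that recognizes vertices. For all u, v, r, s ∈ V, if X(u,v) = X(r,s) then X(u,u) = X(r,r) and X(v,v) = X(s,s). -/
namespace Binding

/-- The diamond product of a labeling: the multiset of 2-d-walk label pairs. -/
def diamond {V L : Type*} [Fintype V] (X : V → V → L) : V → V → Multiset (L × L) :=
  fun u v => Finset.univ.val.map fun k => (X u k, X k v)

/-- A labeling recognizes vertices if diagonal labels never coincide with
off-diagonal labels. -/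
def RecognizesVertices {V L : Type*} (X : V → V → L) : Prop :=
  ∀ i u v : V, u ≠ v → X i i ≠ X u v

/-- `Y` refines `X` if equal `Y`-labels imply equal `X`-labels. -/
def Refines {V L L' : Type*} (Y : V → V → L') (X : V → V → L) : Prop :=
  ∀ u v r s : V, Y u v = Y r s → X u v = X r s

/-- A labeling is stable if labels agree exactly when their diamond products agree. -/
def Stable {V L : Type*} [Fintype V] (X : V → V → L) : Prop :=
  ∀ u v r s : V, X u v = X r s ↔ diamond X u v = diamond X r s

section

variable {V L : Type*} {X : V → V → L}

theorem RecognizesVertices.eq_of_eq_diag (hrec : RecognizesVertices X) {a b i : V}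
    (h : X a b = X i i) : a = b :=
  by_contra fun hab => hrec i a b hab h.symm

variable [Fintype V]

theorem mem_diamond_iff {u v : V} {p : L × L} :
    p ∈ diamond X u v ↔ ∃ k, (X u k, X k v) = p := by
  simp [diamond]

theorem mem_diamond (X : V → V → L) (u k v : V) : (X u k, X k v) ∈ diamond X u v :=
  mem_diamond_iff.mpr ⟨k, rfl⟩

-- The pair `(X u u, X u v)` of `diamond X u v` must occur in `diamond X r s` as some
-- `(X r k, X k s)`, and a diagonal label only sits on the diagonal, so `k = r`.
theorem RecognizesVertices.diag_left_eq_of_diamond_eq (hrec : RecognizesVertices X)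
    {u v r s : V} (hd : diamond X u v = diamond X r s) : X u u = X r r := by
  obtain ⟨k, hk⟩ := mem_diamond_iff.mp (hd ▸ mem_diamond X u u v)
  have hrk : X r k = X u u := congrArg Prod.fst hk
  rw [← hrk, ← hrec.eq_of_eq_diag hrk]

theorem RecognizesVertices.diag_right_eq_of_diamond_eq (hrec : RecognizesVertices X)
    {u v r s : V} (hd : diamond X u v = diamond X r s) : X v v = X s s := by
  obtain ⟨k, hk⟩ := mem_diamond_iff.mp (hd ▸ mem_diamond X u v v)
  have hks : X k s = X v v := congrArg Prod.snd hk
  rw [← hks, hrec.eq_of_eq_diag hks]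

end

/-- in a stable vertex-recognizing labeling, equal labels force
equal diagonal labels at corresponding endpoints. -/
theorem stable_eq_diag
    {V L : Type*} [Fintype V] (X : V → V → L)
    (hstab : Stable X) (hrec : RecognizesVertices X)
    (u v r s : V) (h : X u v = X r s) :
    X u u = X r r ∧ X v v = X s s := by
  have hd : diamond X u v = diamond X r s := (hstab u v r s).mp h
  exact ⟨hrec.diag_left_eq_of_diamond_eq hd, hrec.diag_right_eq_of_diamond_eq hd⟩

end Binding
end

section
/- Let G be a simple graph on a finite vertex set V with |V| > 2, let [G] be its binding graph on W = V ⊕ P, and let M : W → W → L be a coarsest stable vertex-recognizing refinement of [G]. Define the induced φ-labeling Φ : W → W → Option L by Φ(a,a) = some M(a,a) for all a ∈ W, Φ(a,b) = some M(a,b) whenever (a,b) is a binding edge of [G] (i.e. a = inl u and b = inr p with u ∈ p, or symmetrically), and Φ(a,b) = none otherwise. Then: (i) every coarsest stable refinement Z of Φ is equivalent to M, i.e. Z(u,v) = Z(r,s) iff M(u,v) = M(r,s) for all u, v, r, s ∈ W; and (ii) a permutation σ of W satisfies Φ(u,v) = Φ(σ(u), σ(v)) for all u, v if and only if σ is an automorphism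 of the simple graph [G]. -/
namespace Binding

abbrev Pairs (V : Type*) : Type _ := {s : Finset V // s.card = 2}

def bindingGraph {V : Type*} (G : SimpleGraph V) : SimpleGraph (V ⊕ Pairs V) where
  Adj a b :=
    match a, b with
    | Sum.inl u, Sum.inl v => G.Adj u v
    | Sum.inl u, Sum.inr p => u ∈ p.val
    | Sum.inr p, Sum.inl u => u ∈ p.val
    | Sum.inr _, Sum.inr _ => False
  symm := by
    constructor
    rintro (u | p) (v | q) h
    · exact G.adj_symm h
    · exact h
    · exact h
    · exact h
  loopless := by
    constructor
    rintro (u | p) h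
    · exact G.irrefl h
    · exact h

def IsSVRRefinement {W L : Type*} [Fintype W] (H : SimpleGraph W) (M : W → W → L) : Prop :=
  Stable M ∧ RecognizesVertices M ∧
    ∀ u v r s : W, u ≠ v → r ≠ s → M u v = M r s → (H.Adj u v ↔ H.Adj r s)

def IsCoarsestSVRRefinement {W L : Type*} [Fintype W] (H : SimpleGraph W)
    (M : W → W → L) : Prop :=
  IsSVRRefinement H M ∧
    ∀ (L' : Type*) (N : W → W → L'), IsSVRRefinement H N → Refines N M

def phiLabeling {V L : Type*} [DecidableEq V]
    (M : (V ⊕ Pairs V) → (V ⊕ Pairs V) → L) :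
    (V ⊕ Pairs V) → (V ⊕ Pairs V) → Option L := fun a b =>
  if a = b then some (M a b)
  else
    match a, b with
    | Sum.inl u, Sum.inr p =>
        if u ∈ p.val then some (M (Sum.inl u) (Sum.inr p)) else none
    | Sum.inr p, Sum.inl u =>
        if u ∈ p.val then some (M (Sum.inr p) (Sum.inl u)) else none
    | _, _ => none

/-!
In a stable vertex-recognizing refinement `M` of `[G]`, equal diagonal labels force equal
degrees. A binding vertex has degree `2` while a basic vertex with a neighbour in `G` has larger
degree, so a label of a binding edge is carried by binding edges only, and `M` refines `Φ`.
Moreover the label of a binding edge `x – {x, y}` decides whether `xy` is an edge of `G`: the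
diamond of that pair contains the label of `xy`, at the other neighbour `y` of the binding
vertex. Hence adjacency in `[G]` can be read off `Φ` (a Φ-labelled pair, or a Φ-labelled 2-walk
starting with the label of such a binding edge), which is preserved by every stable refinement
of `Φ` and by every permutation preserving `Φ`.

Conversely `M` is invariant under the automorphisms of `[G]`: the labeling
`(u, v) ↦ {M(τ u, τ v) : τ ∈ Aut [G]}` is again a stable vertex-recognizing refinement, so by
minimality it refines `M`, and it is constant along orbits.
-/

open Finset Sum

section Labelings

variable {W L L' L'' : Type*}

lemma Refines.trans {X : W → W → L} {Y : W → W → L'} {Z : W → W → L''}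
    (hZY : Refines Z Y) (hYX : Refines Y X) : Refines Z X :=
  fun u v r s h => hYX u v r s (hZY u v r s h)

lemma RecognizesVertices.of_refines {X : W → W → L} {Y : W → W → L'}
    (hX : RecognizesVertices X) (hYX : Refines Y X) : RecognizesVertices Y :=
  fun i u v huv h => hX i u v huv (hYX i i u v h)

lemma RecognizesVertices.eq_iff_eq {X : W → W → L} (hX : RecognizesVertices X)
    {u v r s : W} (h : X u v = X r s) : u = v ↔ r = s := by
  constructor
  · rintro rfl
    by_contra hrs
    exact hX u r s hrs h
  · rintro rfl
    by_contra huv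
    exact hX r u v huv h.symm

lemma exists_of_diamond_eq [Fintype W] {X : W → W → L} {u v r s : W}
    (h : diamond X u v = diamond X r s) (w : W) :
    ∃ k, X r k = X u w ∧ X k s = X w v := by
  have hw : (X u w, X w v) ∈ diamond X r s := h ▸ Multiset.mem_map_of_mem _ (mem_univ_val w)
  obtain ⟨k, -, hk⟩ := Multiset.mem_map.1 hw
  exact ⟨k, (Prod.ext_iff.1 hk).1, (Prod.ext_iff.1 hk).2⟩

lemma Stable.exists_of_eq [Fintype W] {X : W → W → L} (hX : Stable X) {u v r s : W}
    (h : X u v = X r s) (w : W) : ∃ k, X r k = X u w ∧ X k s = X w v :=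
  exists_of_diamond_eq ((hX u v r s).1 h) w

lemma RecognizesVertices.eq_of_diamond_eq [Fintype W] {X : W → W → L}
    (hX : RecognizesVertices X) {u v r s : W} (h : diamond X u v = diamond X r s) :
    X u v = X r s := by
  obtain ⟨k, hrk, hks⟩ := exists_of_diamond_eq h v
  obtain rfl : k = s := (hX.eq_iff_eq hks).2 rfl
  exact hrk.symm

lemma Stable.diag_eq_of_eq [Fintype W] {X : W → W → L} (hX : Stable X)
    (hXr : RecognizesVertices X) {u v r s : W} (h : X u v = X r s) :
    X u u = X r r ∧ X v v = X s s := by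
  obtain ⟨k, hrk, -⟩ := hX.exists_of_eq h u
  obtain ⟨k', -, hks⟩ := hX.exists_of_eq h v
  obtain rfl : r = k := (hXr.eq_iff_eq hrk).2 rfl
  obtain rfl : k' = s := (hXr.eq_iff_eq hks).2 rfl
  exact ⟨hrk.symm, hks.symm⟩

lemma Refines.diamond_eq [Fintype W] {X : W → W → L} {Y : W → W → L'} (hYX : Refines Y X)
    {u v r s : W} (h : diamond Y u v = diamond Y r s) : diamond X u v = diamond X r s := by
  -- `g` factors `X` through `Y`; `none` is its junk value off the range of `Y`.
  set g : L' → Option L := Function.extend (fun p : W × W => Y p.1 p.2)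
    (fun p => some (X p.1 p.2)) fun _ => none
  have hg : ∀ a b, g (Y a b) = some (X a b) := fun a b =>
    Function.FactorsThrough.extend_apply
      (fun p q hpq => congrArg some (hYX p.1 p.2 q.1 q.2 hpq)) _ (a, b)
  have hmap : ∀ a b, (diamond X a b).map (Prod.map some some) =
      (diamond Y a b).map (Prod.map g g) := fun a b => by
    simp only [diamond, Multiset.map_map, Function.comp_def, Prod.map, hg]
  refine Multiset.map_injective
    ((Option.some_injective L).prodMap (Option.some_injective L)) ?_
  rw [hmap, hmap, h]

lemma Stable.of_refines [Fintype W] {X : W → W → L} {Y : W → W → L'} (hX : Stable X)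
    (hXY : Refines X Y) (hYX : Refines Y X) : Stable Y := fun u v r s =>
  ⟨fun h => hXY.diamond_eq ((hX u v r s).1 (hYX u v r s h)),
    fun h => hXY u v r s ((hX u v r s).2 (hYX.diamond_eq h))⟩

lemma diamond_comp [Fintype W] (X : W → W → L) {e : W → W} (he : e.Bijective) (u v : W) :
    diamond (fun a b => X (e a) (e b)) u v = diamond X (e u) (e v) := by
  conv_rhs => rw [diamond, ← Multiset.map_univ_val_equiv (Equiv.ofBijective e he),
    Multiset.map_map]
  rfl

/-- Coarsestness quantifies over labelings in one fixed universe; recoding labels by natural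
numbers moves a labeling into any universe. -/
lemma exists_ulift_nat_labeling.{v} [Finite W] (X : W → W → L) :
    ∃ X₀ : W → W → ULift.{v} ℕ, Refines X X₀ ∧ Refines X₀ X := by
  obtain ⟨f, hf⟩ := Set.countable_iff_exists_injOn.1
    (Set.finite_range fun p : W × W => X p.1 p.2).countable
  exact ⟨fun u v => ⟨f (X u v)⟩, fun u v r s h => congrArg (fun ℓ => ULift.up (f ℓ)) h,
    fun u v r s h => hf ⟨(u, v), rfl⟩ ⟨(r, s), rfl⟩ (congrArg ULift.down h)⟩

end Labelings

section Orbits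

variable {W L : Type*} {H : SimpleGraph W} {M : W → W → L}

def orbitLabeling (H : SimpleGraph W) (M : W → W → L) (u v : W) : Set L :=
  Set.range fun τ : H ≃g H => M (τ u) (τ v)

lemma orbitLabeling_apply_iso (σ : H ≃g H) (u v : W) :
    orbitLabeling H M (σ u) (σ v) = orbitLabeling H M u v := by
  ext ℓ
  constructor
  · rintro ⟨τ, rfl⟩
    exact ⟨σ.trans τ, rfl⟩
  · rintro ⟨τ, rfl⟩
    exact ⟨σ.symm.trans τ, by simp⟩

lemma exists_of_orbitLabeling_eq {u v r s : W}
    (h : orbitLabeling H M u v = orbitLabeling H M r s) :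
    ∃ τ : H ≃g H, M (τ u) (τ v) = M r s :=
  have hrs : M r s ∈ orbitLabeling H M u v := h ▸ ⟨RelIso.refl _, rfl⟩
  hrs

end Orbits

section Refinements

variable {W L L' : Type*} [Fintype W] {H : SimpleGraph W} {M : W → W → L}

lemma IsSVRRefinement.of_refines {N : W → W → L'} (hM : IsSVRRefinement H M)
    (hMN : Refines M N) (hNM : Refines N M) : IsSVRRefinement H N :=
  ⟨hM.1.of_refines hMN hNM, hM.2.1.of_refines hNM,
    fun u v r s huv hrs h => hM.2.2 u v r s huv hrs (hNM u v r s h)⟩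

lemma IsCoarsestSVRRefinement.refines (hM : IsCoarsestSVRRefinement H M)
    {N : W → W → L'} (hN : IsSVRRefinement H N) : Refines N M := by
  obtain ⟨N₀, hNN₀, hN₀N⟩ := exists_ulift_nat_labeling N
  exact hNN₀.trans (hM.2 _ N₀ (hN.of_refines hNN₀ hN₀N))

lemma IsSVRRefinement.adj_iff (hM : IsSVRRefinement H M) {u v r s : W}
    (h : M u v = M r s) : H.Adj u v ↔ H.Adj r s := by
  by_cases huv : u = v
  · obtain rfl := (hM.2.1.eq_iff_eq h).1 huv
    subst huv
    simp
  · exact hM.2.2 u v r s huv (mt (hM.2.1.eq_iff_eq h).2 huv) h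

/-- Stability lets the diamond at `(x, x)` count the edges at `x`, and edge labels are
recognised as labels of adjacent pairs. -/
lemma IsSVRRefinement.degree_eq [DecidableRel H.Adj] (hM : IsSVRRefinement H M) {x y : W}
    (h : M x x = M y y) : H.degree x = H.degree y := by
  classical
  set E : Set L := {ℓ | ∃ r s, H.Adj r s ∧ M r s = ℓ}
  have hE : ∀ z k, M z k ∈ E ↔ H.Adj z k := fun z k =>
    ⟨fun ⟨_, _, hrs, he⟩ => (hM.adj_iff he).1 hrs, fun hzk => ⟨z, k, hzk, rfl⟩⟩
  have hdeg : ∀ z, H.degree z = (diamond M z z).countP (fun q => q.1 ∈ E) := fun z => by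
    simp only [diamond, Multiset.countP_map, hE]
    rw [← SimpleGraph.card_neighborFinset_eq_degree, SimpleGraph.neighborFinset_eq_filter]
    rfl
  rw [hdeg, hdeg, (hM.1 x x y y).1 h]

lemma IsSVRRefinement.comp_iso (hM : IsSVRRefinement H M) (τ : H ≃g H) :
    IsSVRRefinement H fun u v => M (τ u) (τ v) := by
  refine ⟨fun u v r s => ?_, fun i u v huv => hM.2.1 _ _ _ (τ.injective.ne huv),
    fun u v r s _ _ h => ?_⟩
  · rw [diamond_comp M τ.bijective, diamond_comp M τ.bijective]
    exact hM.1 _ _ _ _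
  · exact τ.map_adj_iff.symm.trans ((hM.adj_iff h).trans τ.map_adj_iff)

lemma IsCoarsestSVRRefinement.apply_iso_eq_apply_iso (hM : IsCoarsestSVRRefinement H M)
    (τ : H ≃g H) {x y x' y' : W} (h : M x y = M x' y') :
    M (τ x) (τ y) = M (τ x') (τ y') :=
  hM.refines (hM.1.comp_iso τ.symm) (τ x) (τ y) (τ x') (τ y') (by simpa using h)

lemma IsCoarsestSVRRefinement.refines_orbitLabeling (hM : IsCoarsestSVRRefinement H M) :
    Refines M (orbitLabeling H M) := by
  intro u v r s h
  ext ℓ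
  constructor
  · rintro ⟨τ, rfl⟩
    exact ⟨τ, (hM.apply_iso_eq_apply_iso τ h).symm⟩
  · rintro ⟨τ, rfl⟩
    exact ⟨τ, hM.apply_iso_eq_apply_iso τ h⟩

lemma IsCoarsestSVRRefinement.isSVRRefinement_orbitLabeling
    (hM : IsCoarsestSVRRefinement H M) : IsSVRRefinement H (orbitLabeling H M) := by
  have hrec : RecognizesVertices (orbitLabeling H M) := fun i u v huv h => by
    obtain ⟨τ, hτ⟩ := exists_of_orbitLabeling_eq h
    exact hM.1.2.1 _ _ _ huv hτ
  refine ⟨fun u v r s => ⟨fun h => ?_, hrec.eq_of_diamond_eq⟩, hrec,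
    fun u v r s _ _ h => ?_⟩
  · obtain ⟨τ, hτ⟩ := exists_of_orbitLabeling_eq h
    have hinv : diamond (orbitLabeling H M) (τ u) (τ v) = diamond (orbitLabeling H M) u v := by
      rw [← diamond_comp _ τ.bijective]
      simp only [orbitLabeling_apply_iso]
    rw [← hinv]
    exact hM.refines_orbitLabeling.diamond_eq ((hM.1.1 _ _ _ _).1 hτ)
  · obtain ⟨τ, hτ⟩ := exists_of_orbitLabeling_eq h
    exact τ.map_adj_iff.symm.trans (hM.1.adj_iff hτ)

lemma IsCoarsestSVRRefinement.apply_iso (hM : IsCoarsestSVRRefinement H M) (σ : H ≃g H)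
    (u v : W) : M (σ u) (σ v) = M u v :=
  hM.refines hM.isSVRRefinement_orbitLabeling _ _ _ _ (orbitLabeling_apply_iso σ u v)

end Refinements

section BindingGraph

variable {V : Type*} {G : SimpleGraph V}

@[simp] lemma bindingGraph_adj_inl_inl {u v : V} :
    (bindingGraph G).Adj (inl u) (inl v) ↔ G.Adj u v := Iff.rfl

@[simp] lemma bindingGraph_adj_inl_inr {u : V} {p : Pairs V} :
    (bindingGraph G).Adj (inl u) (inr p) ↔ u ∈ p.val := Iff.rfl

@[simp] lemma bindingGraph_adj_inr_inl {u : V} {p : Pairs V} :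
    (bindingGraph G).Adj (inr p) (inl u) ↔ u ∈ p.val := Iff.rfl

@[simp] lemma not_bindingGraph_adj_inr_inr {p q : Pairs V} :
    ¬ (bindingGraph G).Adj (inr p) (inr q) := id

/-- The binding edges of `[G]` are the edges of the binding graph of the empty graph. -/
abbrev bindingEdges (V : Type*) : SimpleGraph (V ⊕ Pairs V) := bindingGraph ⊥

lemma bindingEdges_le_bindingGraph : bindingEdges V ≤ bindingGraph G := by
  rintro (u | p) (v | q) h
  · exact absurd h (by simp)
  all_goals exact h

lemma bindingGraph_degree_inr [Fintype V] [DecidableRel (bindingGraph G).Adj] (p : Pairs V) :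
    (bindingGraph G).degree (inr p) = 2 := by
  have hN : (bindingGraph G).neighborFinset (inr p) = p.val.map Function.Embedding.inl := by
    ext (u | q) <;> simp
  rw [← SimpleGraph.card_neighborFinset_eq_degree, hN, card_map, p.2]

variable [DecidableEq V]

lemma Pairs.eq_of_mem {p : Pairs V} {a b c : V} (ha : a ∈ p.val) (hb : b ∈ p.val)
    (hc : c ∈ p.val) (hab : a ≠ b) (hca : c ≠ a) : c = b := by
  obtain ⟨x, y, -, hp⟩ := Finset.card_eq_two.1 p.2
  rw [hp, mem_insert, mem_singleton] at ha hb hc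
  grind

lemma exists_pairs_mem {a b : V} (hab : a ≠ b) : ∃ p : Pairs V, a ∈ p.val ∧ b ∈ p.val :=
  ⟨⟨{a, b}, card_pair hab⟩, by simp, by simp⟩

variable [Fintype V]

lemma two_lt_bindingGraph_degree_inl [DecidableRel (bindingGraph G).Adj]
    (hcard : 2 < Fintype.card V) {a b : V} (hab : G.Adj a b) :
    2 < (bindingGraph G).degree (inl a) := by
  obtain ⟨c, -, hc⟩ := exists_mem_notMem_of_card_lt_card (s := {a, b}) (t := univ)
    ((card_le_two).trans_lt hcard)
  rw [mem_insert, mem_singleton, not_or] at hc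
  let pab : Pairs V := ⟨{a, b}, card_pair hab.ne⟩
  let pac : Pairs V := ⟨{a, c}, card_pair (Ne.symm hc.1)⟩
  have hne : pab ≠ pac := fun h => by
    have hb : b ∈ pac.val := h ▸ by simp [pab]
    simp [pac, hab.ne'] at hb
    exact hc.2 hb.symm
  have hsub : {inl b, inr pab, inr pac} ⊆ (bindingGraph G).neighborFinset (inl a) := by
    intro z hz
    simp only [mem_insert, mem_singleton] at hz
    rcases hz with rfl | rfl | rfl <;> simp [hab, pab, pac]
  have h3 : ({inl b, inr pab, inr pac} : Finset (V ⊕ Pairs V)).card = 3 := by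
    rw [card_insert_of_notMem (by simp), card_pair (by simpa using hne)]
  have := card_le_card hsub
  rw [SimpleGraph.card_neighborFinset_eq_degree] at this
  omega

end BindingGraph

section BindingLabels

variable {V L : Type*} [Fintype V] [DecidableEq V] {G : SimpleGraph V}
  {M : (V ⊕ Pairs V) → (V ⊕ Pairs V) → L}

/-- A binding vertex has degree `2`, a basic vertex with a neighbour in `G` has degree
greater than `2`. -/
lemma IsSVRRefinement.diag_inl_ne_diag_inr (hM : IsSVRRefinement (bindingGraph G) M)
    (hcard : 2 < Fintype.card V) {a b : V} (hab : G.Adj a b) (p : Pairs V) :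
    M (inl a) (inl a) ≠ M (inr p) (inr p) := by
  classical
  intro h
  have hdeg := hM.degree_eq h
  rw [bindingGraph_degree_inr] at hdeg
  exact (two_lt_bindingGraph_degree_inl hcard hab).ne' hdeg

lemma IsSVRRefinement.bindingEdges_adj_of_eq (hM : IsSVRRefinement (bindingGraph G) M)
    (hcard : 2 < Fintype.card V) {a b r s : V ⊕ Pairs V} (hab : (bindingEdges V).Adj a b)
    (h : M a b = M r s) : (bindingEdges V).Adj r s := by
  have hrs : (bindingGraph G).Adj r s := (hM.adj_iff h).1 (bindingEdges_le_bindingGraph hab)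
  obtain ⟨hdiag_a, hdiag_b⟩ := hM.1.diag_eq_of_eq hM.2.1 h
  rcases r with x | q <;> rcases s with y | q'
  · rcases a with x' | p <;> rcases b with y' | p'
    · simp at hab
    · exact absurd hdiag_b.symm (hM.diag_inl_ne_diag_inr hcard hrs.symm p')
    · exact absurd hdiag_a.symm (hM.diag_inl_ne_diag_inr hcard hrs p)
    · simp at hab
  · exact hrs
  · exact hrs
  · simp at hrs

/-- The walk `a – b – p` is matched by a walk `c – k – q`; then `k` is a neighbour of `q`
other than `c`, so `k = d` and the pairs `ab` and `cd` carry the same label. -/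
lemma IsSVRRefinement.adj_iff_adj_of_eq (hM : IsSVRRefinement (bindingGraph G) M)
    {a b c d : V} {p q : Pairs V} (hb : b ∈ p.val) (hab : a ≠ b)
    (hc : c ∈ q.val) (hd : d ∈ q.val) (hcd : c ≠ d)
    (h : M (inl a) (inr p) = M (inl c) (inr q)) : G.Adj a b ↔ G.Adj c d := by
  obtain ⟨k, hck, hkq⟩ := hM.1.exists_of_eq h (inl b)
  have hk : (bindingGraph G).Adj k (inr q) := (hM.adj_iff hkq).2 hb
  rcases k with z | q'
  · obtain rfl : z = d := Pairs.eq_of_mem hc hd hk hcd fun hzc =>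
      hab (inl_injective ((hM.2.1.eq_iff_eq hck).1 (congrArg inl hzc.symm)))
    exact (hM.adj_iff hck).symm
  · simp at hk

lemma IsSVRRefinement.adj_of_bindingEdges_path (hM : IsSVRRefinement (bindingGraph G) M)
    (hcard : 2 < Fintype.card V) {x y : V} {p : Pairs V} (hxy : G.Adj x y)
    (hy : y ∈ p.val) {a k b : V ⊕ Pairs V} (hak : (bindingEdges V).Adj a k)
    (hkb : (bindingEdges V).Adj k b) (hab : a ≠ b) (h : M a k = M (inl x) (inr p)) :
    (bindingGraph G).Adj a b := by
  rcases a with c | q <;> rcases k with z | q'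
  · simp at hak
  · rcases b with d | q''
    · exact (hM.adj_iff_adj_of_eq hy hxy.ne hak hkb (by simpa using hab) h.symm).1 hxy
    · simp at hkb
  · exact absurd (hM.1.diag_eq_of_eq hM.2.1 h).1.symm (hM.diag_inl_ne_diag_inr hcard hxy q)
  · simp at hak

end BindingLabels

section PhiAdj

variable {W L L' : Type*} {S : Set L} {X : W → W → Option L}

/-- How adjacency in `[G]` is read off the φ-labeling: `a` and `b` form a labelled pair, or
they are joined by a walk of two labelled pairs whose first label lies in `S`. -/
def PhiAdj (S : Set L) (X : W → W → Option L) (a b : W) : Prop :=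
  (X a b).isSome ∨ ∃ k, ∃ ℓ ∈ S, X a k = some ℓ ∧ (X k b).isSome

lemma PhiAdj.of_stable_refines [Fintype W] {Z : W → W → L'} (hZ : Stable Z)
    (hZX : Refines Z X) {u v r s : W} (h : Z u v = Z r s) (huv : PhiAdj S X u v) :
    PhiAdj S X r s := by
  rcases huv with huv | ⟨k, ℓ, hℓ, huk, hkv⟩
  · exact Or.inl (hZX u v r s h ▸ huv)
  · obtain ⟨k', hrk, hks⟩ := hZ.exists_of_eq h k
    exact Or.inr ⟨k', ℓ, hℓ, (hZX _ _ _ _ hrk).trans huk, hZX _ _ _ _ hks ▸ hkv⟩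

lemma PhiAdj.map {σ : W → W} (hσ : ∀ u v, X u v = X (σ u) (σ v)) {a b : W}
    (h : PhiAdj S X a b) : PhiAdj S X (σ a) (σ b) := by
  rcases h with h | ⟨k, ℓ, hℓ, hak, hkb⟩
  · exact Or.inl (hσ a b ▸ h)
  · exact Or.inr ⟨σ k, ℓ, hℓ, hσ a k ▸ hak, hσ k b ▸ hkb⟩

lemma phiAdj_apply_iff (σ : Equiv.Perm W) (hσ : ∀ u v, X u v = X (σ u) (σ v)) (a b : W) :
    PhiAdj S X (σ a) (σ b) ↔ PhiAdj S X a b := by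
  refine ⟨fun h => ?_, PhiAdj.map hσ⟩
  simpa using h.map (σ := σ.symm) fun u v => by simpa using (hσ (σ.symm u) (σ.symm v)).symm

end PhiAdj

section PhiLabeling

variable {V L : Type*} [DecidableEq V] {M : (V ⊕ Pairs V) → (V ⊕ Pairs V) → L}

open Classical in
lemma phiLabeling_eq_ite (a b : V ⊕ Pairs V) : phiLabeling M a b =
    if a = b ∨ (bindingEdges V).Adj a b then some (M a b) else none := by
  by_cases hab : a = b
  · subst hab
    simp [phiLabeling]
  · rcases a with u | p <;> rcases b with v | q <;> simp [phiLabeling, hab]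

lemma phiLabeling_eq_some_iff {a b : V ⊕ Pairs V} {ℓ : L} :
    phiLabeling M a b = some ℓ ↔ (a = b ∨ (bindingEdges V).Adj a b) ∧ M a b = ℓ := by
  classical
  rw [phiLabeling_eq_ite]
  split_ifs <;> simp [*]

lemma isSome_phiLabeling_iff {a b : V ⊕ Pairs V} :
    (phiLabeling M a b).isSome ↔ a = b ∨ (bindingEdges V).Adj a b := by
  classical
  rw [phiLabeling_eq_ite]
  split_ifs <;> simp [*]

lemma recognizesVertices_phiLabeling (hM : RecognizesVertices M) :
    RecognizesVertices (phiLabeling M) := fun i u v huv h =>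
  hM i u v huv (phiLabeling_eq_some_iff.1
    (h.symm.trans (phiLabeling_eq_some_iff.2 ⟨Or.inl rfl, rfl⟩))).2.symm

variable [Fintype V] {G : SimpleGraph V}

lemma IsSVRRefinement.refines_phiLabeling (hM : IsSVRRefinement (bindingGraph G) M)
    (hcard : 2 < Fintype.card V) : Refines M (phiLabeling M) := by
  classical
  intro u v r s h
  rw [phiLabeling_eq_ite, phiLabeling_eq_ite, h]
  exact if_congr (or_congr (hM.2.1.eq_iff_eq h)
    ⟨fun huv => hM.bindingEdges_adj_of_eq hcard huv h,
      fun hrs => hM.bindingEdges_adj_of_eq hcard hrs h.symm⟩) rfl rfl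

def edgeBindingLabels (G : SimpleGraph V) (M : (V ⊕ Pairs V) → (V ⊕ Pairs V) → L) : Set L :=
  {ℓ | ∃ x y p, G.Adj x y ∧ x ∈ p.val ∧ y ∈ p.val ∧ M (inl x) (inr p) = ℓ}

lemma IsSVRRefinement.adj_iff_phiAdj (hM : IsSVRRefinement (bindingGraph G) M)
    (hcard : 2 < Fintype.card V) {a b : V ⊕ Pairs V} (hab : a ≠ b) :
    (bindingGraph G).Adj a b ↔ PhiAdj (edgeBindingLabels G M) (phiLabeling M) a b := by
  constructor
  · intro h
    rcases a with x | p <;> rcases b with y | q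
    · obtain ⟨p, hx, hy⟩ := exists_pairs_mem (G.ne_of_adj h)
      exact Or.inr ⟨inr p, _, ⟨x, y, p, h, hx, hy, rfl⟩,
        phiLabeling_eq_some_iff.2 ⟨Or.inr hx, rfl⟩, isSome_phiLabeling_iff.2 (Or.inr hy)⟩
    · exact Or.inl (isSome_phiLabeling_iff.2 (Or.inr h))
    · exact Or.inl (isSome_phiLabeling_iff.2 (Or.inr h))
    · simp at h
  · rintro (h | ⟨k, _, ⟨x, y, p, hxy, hx, hy, rfl⟩, hak, hkb⟩)
    · exact bindingEdges_le_bindingGraph ((isSome_phiLabeling_iff.1 h).resolve_left hab)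
    · obtain ⟨hak | hak, hlabel⟩ := phiLabeling_eq_some_iff.1 hak
      · exact absurd (hak ▸ hlabel) (hM.2.1 a (inl x) (inr p) (by simp))
      · rcases isSome_phiLabeling_iff.1 hkb with rfl | hkb
        · exact bindingEdges_le_bindingGraph hak
        · exact hM.adj_of_bindingEdges_path hcard hxy hy hak hkb hab hlabel

lemma IsSVRRefinement.of_refines_phiLabeling {L' : Type*}
    {Z : (V ⊕ Pairs V) → (V ⊕ Pairs V) → L'} (hM : IsSVRRefinement (bindingGraph G) M)
    (hcard : 2 < Fintype.card V) (hZ : Stable Z) (hZM : Refines Z (phiLabeling M)) :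
    IsSVRRefinement (bindingGraph G) Z := by
  refine ⟨hZ, (recognizesVertices_phiLabeling hM.2.1).of_refines hZM, fun u v r s huv hrs h => ?_⟩
  rw [hM.adj_iff_phiAdj hcard huv, hM.adj_iff_phiAdj hcard hrs]
  exact ⟨.of_stable_refines hZ hZM h, .of_stable_refines hZ hZM h.symm⟩

end PhiLabeling

/-- for a coarsest stable vertex-recognizing refinement `M` of a
binding graph, (i) any coarsest stable refinement of the induced φ-labeling is
equivalent to `M`, and (ii) the automorphisms of the φ-labeling are exactly the
automorphisms of the binding graph. -/
theorem phi_graph_theorem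
    {V L : Type*} [Fintype V] [DecidableEq V] (G : SimpleGraph V)
    (hcard : 2 < Fintype.card V)
    (M : (V ⊕ Pairs V) → (V ⊕ Pairs V) → L)
    (hM : IsCoarsestSVRRefinement (bindingGraph G) M) :
    (∀ (L' : Type*) (Z : (V ⊕ Pairs V) → (V ⊕ Pairs V) → L'),
      Stable Z → Refines Z (phiLabeling M) →
      (∀ (L'' : Type*) (Z' : (V ⊕ Pairs V) → (V ⊕ Pairs V) → L''),
        Stable Z' → Refines Z' (phiLabeling M) → Refines Z' Z) →
      ∀ u v r s : V ⊕ Pairs V, Z u v = Z r s ↔ M u v = M r s) ∧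
    (∀ σ : Equiv.Perm (V ⊕ Pairs V),
      (∀ u v : V ⊕ Pairs V, phiLabeling M u v = phiLabeling M (σ u) (σ v)) ↔
      (∀ a b : V ⊕ Pairs V,
        (bindingGraph G).Adj a b ↔ (bindingGraph G).Adj (σ a) (σ b))) := by
  have hMΦ : Refines M (phiLabeling M) := hM.1.refines_phiLabeling hcard
  constructor
  · intro L' Z hZ hZΦ hZmin u v r s
    obtain ⟨M₀, hMM₀, hM₀M⟩ := exists_ulift_nat_labeling M
    have hM₀Z : Refines M₀ Z := hZmin _ M₀ (hM.1.1.of_refines hMM₀ hM₀M) (hM₀M.trans hMΦ)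
    exact ⟨hM.refines (hM.1.of_refines_phiLabeling hcard hZ hZΦ) u v r s,
      fun h => hM₀Z u v r s (hMM₀ u v r s h)⟩
  · intro σ
    constructor
    · intro hσ a b
      by_cases hab : a = b
      · simp [hab]
      · rw [hM.1.adj_iff_phiAdj hcard hab, hM.1.adj_iff_phiAdj hcard (σ.injective.ne hab),
          phiAdj_apply_iff σ hσ]
    · intro hσ u v
      exact (hMΦ _ _ _ _ (hM.apply_iso ⟨σ, fun {a b} => (hσ a b).symm⟩ u v)).symm

end Binding
end
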